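/- arXiv:2210.13731 — 6 statements merged into one kernel-verified Lean document; each statement's English description precedes it below -/
import Mathlib

section
/- Let C = [c_{n,k}] be the infinite lower triangular matrix with c_{n,n} = 1 and c_{n,k} = Π_{j=k}^{n-1} g_{j+1}/(h_n - h_j) for 0 ≤ k < n. Then C is invertible and its inverse C^{-1} = [ĉ_{n,k}] is given by ĉ_{n,n} = 1 and ĉ_{n,k} = Π_{j=k+1}^{n} g_j/(h_k - h_j) for 0 ≤ k < n. -/
open Finset

/-- The lower triangular matrix `C = [c_{n,k}]` with `c_{n,n} = 1` and
`c_{n,k} = Π_{j=k}^{n-1} g_{j+1}/(h_n - h_j)` has inverse `Ĉ = [ĉ_{n,k}]` with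
`ĉ_{n,n} = 1` and `ĉ_{n,k} = Π_{j=k+1}^{n} g_j/(h_k - h_j)`; that is,
`Σ_{k=m}^{n} c_{n,k} ĉ_{k,m} = δ_{n,m}` for all `m ≤ n`. -/
theorem inverse_of_coefficient_matrix
    (h g : ℕ → ℂ) (hh : Function.Injective h) :
    ∀ n m : ℕ, m ≤ n →
      ∑ k ∈ Finset.Icc m n,
          (∏ j ∈ Finset.Ico k n, g (j + 1) / (h n - h j)) *
            (∏ j ∈ Finset.Icc (m + 1) k, g j / (h m - h j))
        = if n = m then 1 else 0 := by
  intro n m hmn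
  rcases eq_or_lt_of_le hmn with rfl | hlt
  · simp
  · rw [if_neg hlt.ne']
    -- abbreviations
    set P : ℕ → ℂ := fun k => ∏ j ∈ Ico k n, (h n - h j) with hP
    set Q : ℕ → ℂ := fun k => ∏ j ∈ Ico (m+1) k, (h m - h j) with hQ
    have hPne : ∀ k, P k ≠ 0 := by
      intro k
      refine prod_ne_zero_iff.2 fun j hj => sub_ne_zero.2 fun e => ?_
      exact absurd (hh e) (by simp at hj; omega)
    have hQne : ∀ k, Q k ≠ 0 := by
      intro k
      refine prod_ne_zero_iff.2 fun j hj => sub_ne_zero.2 fun e => ?_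
      exact absurd (hh e) (by simp at hj; omega)
    have hab : h n - h m ≠ 0 := sub_ne_zero.2 fun e => absurd (hh e) (by omega)
    set T : ℕ → ℂ := fun k => (P k * Q (k+1))⁻¹ with hT
    set W : ℕ → ℂ := fun k => (P k * Q k)⁻¹ with hW
    -- telescoping pieces
    have h1 : (h n - h m) * T m = W (m+1) := by
      have e1 : P m = (h n - h m) * P (m+1) := prod_eq_prod_Ico_succ_bot hlt _
      have e2 : Q (m+1) = 1 := by simp [hQ]
      simp only [hT, hW, e1, e2, mul_one]
      rw [mul_inv, ← mul_assoc, mul_inv_cancel₀ hab, one_mul]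
    have h3 : (h n - h m) * T n = - W n := by
      have e1 : P n = 1 := by simp [hP]
      have e2 : Q (n+1) = -(Q n * (h n - h m)) := by
        simp only [hQ]
        rw [prod_Ico_succ_top hlt (fun j => h m - h j)]; ring
      simp only [hT, hW, e1, e2, one_mul]
      rw [inv_neg, mul_neg, neg_inj, mul_inv, mul_comm (Q n)⁻¹ (h n - h m)⁻¹,
        ← mul_assoc, mul_inv_cancel₀ hab, one_mul]
    have h2 : ∀ k, m < k → k < n → (h n - h m) * T k = W (k+1) - W k := by
      intro k hmk hkn
      have e1 : P k = (h n - h k) * P (k+1) := prod_eq_prod_Ico_succ_bot hkn _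
      have e2 : Q (k+1) = Q k * (h m - h k) := prod_Ico_succ_top hmk _
      have hx : h n - h k ≠ 0 := sub_ne_zero.2 fun e => absurd (hh e) (by omega)
      have hy : h m - h k ≠ 0 := sub_ne_zero.2 fun e => absurd (hh e) (by omega)
      have hp := hPne (k+1)
      have hq := hQne k
      simp only [hT, hW, e1, e2]
      field_simp
      ring
    -- telescoping sum over the interior
    have h4 : ∑ k ∈ Ioo m n, ((h n - h m) * T k) = W n - W (m+1) := by
      rw [Finset.sum_congr rfl (fun k hk => h2 k (mem_Ioo.1 hk).1 (mem_Ioo.1 hk).2)]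
      have : Ioo m n = Ico (m+1) n := by rw [← Finset.Ico_add_one_left_eq_Ioo]
      rw [this, Finset.sum_Ico_eq_sum_range]
      have := Finset.sum_range_sub (f := fun i => W (m + 1 + i)) (n - (m+1))
      simp only [← add_assoc] at this
      rw [this]
      congr 2
      omega
    -- total sum of T vanishes
    have hsum : ∑ k ∈ Icc m n, T k = 0 := by
      have hmain : ∑ k ∈ Icc m n, ((h n - h m) * T k) = 0 := by
        rw [← Finset.Ioc_insert_left hmn, Finset.sum_insert (by simp),
            ← Finset.Ioo_insert_right hlt, Finset.sum_insert (by simp), h1, h3, h4]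
        ring
      rw [← Finset.mul_sum] at hmain
      exact (mul_eq_zero.1 hmain).resolve_left hab
    -- rewrite each summand as G * T k
    have key : ∀ k ∈ Icc m n,
        (∏ j ∈ Ico k n, g (j + 1) / (h n - h j)) *
          (∏ j ∈ Icc (m + 1) k, g j / (h m - h j))
          = (∏ j ∈ Ico (m+1) (n+1), g j) * T k := by
      intro k hk
      rw [mem_Icc] at hk
      have e1 : (∏ j ∈ Ico k n, g (j+1)) = ∏ j ∈ Ico (k+1) (n+1), g j :=
        prod_Ico_add' g k n 1
      have e2 : ((∏ j ∈ Ico (m+1) (k+1), g j) * ∏ j ∈ Ico (k+1) (n+1), g j)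
          = ∏ j ∈ Ico (m+1) (n+1), g j :=
        prod_Ico_consecutive g (by omega) (by omega)
      rw [prod_div_distrib, prod_div_distrib, ← Finset.Ico_add_one_right_eq_Icc, e1, ← e2]
      simp only [hT, hP, hQ, Nat.succ_eq_add_one]
      rw [div_mul_div_comm]
      ring
    rw [Finset.sum_congr rfl key, ← Finset.mul_sum, hsum, mul_zero]
end

section
/- With c_{n,k} = Π_{j=k}^{n-1} g_{j+1}/(h_n - h_j) (and c_{n,n} = 1) and m_k = Π_{j=1}^{k} g_j/(h_0 - h_j) (and m_0 = 1), the identity Σ_{k=0}^{n} c_{n,k} m_k = 0 holds for every n ≥ 1. -/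
open Finset

private lemma aux_mid (d x y P Q : ℂ) (hx : x ≠ 0) (hy : y ≠ 0) (hP : P ≠ 0) (hQ : Q ≠ 0)
    (hd : d ≠ 0) (hxy : d = y - x) :
    (y * P * (Q * x))⁻¹ = (d * P * (Q * x))⁻¹ - (d * (y * P) * Q)⁻¹ := by
  have h1 : d * P * (Q * x) ≠ 0 := mul_ne_zero (mul_ne_zero hd hP) (mul_ne_zero hQ hx)
  have h2 : d * (y * P) * Q ≠ 0 := mul_ne_zero (mul_ne_zero hd (mul_ne_zero hy hP)) hQ
  have ha : y * P * (Q * x) ≠ 0 := mul_ne_zero (mul_ne_zero hy hP) (mul_ne_zero hQ hx)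
  rw [inv_sub_inv h1 h2, inv_eq_one_div, div_eq_div_iff ha (mul_ne_zero h1 h2), hxy]
  ring

private lemma aux_top (x Q : ℂ) (hx : x ≠ 0) (hQ : Q ≠ 0) :
    (1 * (Q * x))⁻¹ = 0 - (-x * 1 * Q)⁻¹ := by
  field_simp
  ring

/-- With `c_{n,k} = Π_{j=k}^{n-1} g_{j+1}/(h_n - h_j)` (so `c_{n,n} = 1`) and the
generalized moments `m_k = Π_{j=1}^{k} g_j/(h_0 - h_j)` (so `m_0 = 1`), one has
`Σ_{k=0}^{n} c_{n,k} m_k = 0` for every `n ≥ 1`. -/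
theorem moments_annihilated_by_coefficients
    (h g : ℕ → ℂ) (hh : Function.Injective h) :
    ∀ n : ℕ, 1 ≤ n →
      ∑ k ∈ Finset.range (n + 1),
          (∏ j ∈ Finset.Ico k n, g (j + 1) / (h n - h j)) *
            (∏ j ∈ Finset.Icc 1 k, g j / (h 0 - h j))
        = 0 := by
  intro n hn
  set P : ℕ → ℂ := fun k => ∏ j ∈ Ico k n, (h n - h j) with hPdef
  set Q : ℕ → ℂ := fun k => ∏ j ∈ Icc 1 k, (h 0 - h j) with hQdef
  have hx : ∀ j, 1 ≤ j → h 0 - h j ≠ 0 := by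
    intro j hj
    exact sub_ne_zero.mpr fun e => (Nat.one_le_iff_ne_zero.mp hj) (hh e).symm
  have hy : ∀ j, j < n → h n - h j ≠ 0 := by
    intro j hj
    exact sub_ne_zero.mpr fun e => (Nat.ne_of_lt hj) (hh e).symm
  have hd : h n - h 0 ≠ 0 := hy 0 hn
  have hPne : ∀ k, P k ≠ 0 := by
    intro k
    exact prod_ne_zero_iff.mpr fun j hj => hy j (mem_Ico.mp hj).2
  have hQne : ∀ k, Q k ≠ 0 := by
    intro k
    exact prod_ne_zero_iff.mpr fun j hj => hx j (mem_Icc.mp hj).1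
  -- the telescoping function
  set G : ℕ → ℂ := fun k =>
    if k = 0 ∨ n < k then 0 else ((h n - h 0) * P k * Q (k - 1))⁻¹ with hGdef
  have key : ∀ k, k ≤ n → (P k * Q k)⁻¹ = G (k + 1) - G k := by
    intro k hk
    rcases Nat.eq_zero_or_pos k with rfl | hk1
    · -- k = 0
      have hG0 : G 0 = 0 := by simp [hGdef]
      have hG1 : G 1 = ((h n - h 0) * P 1 * Q 0)⁻¹ := by
        simp [hGdef, Nat.not_lt.mpr hn]
      have hQ0 : Q 0 = 1 := by simp [hQdef]
      have hP0 : P 0 = (h n - h 0) * P 1 := by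
        simpa [hPdef] using Finset.prod_eq_prod_Ico_succ_bot hn (fun j => h n - h j)
      rw [hG0, hG1, hQ0, hP0]
      ring
    · obtain ⟨l, rfl⟩ : ∃ l, k = l + 1 := ⟨k - 1, (Nat.succ_pred_eq_of_pos hk1).symm⟩
      have hQk : Q (l + 1) = Q l * (h 0 - h (l + 1)) := by
        simp [hQdef, Finset.prod_Icc_succ_top (Nat.le_add_left 1 l)]
      have hGk : G (l + 1) = ((h n - h 0) * P (l + 1) * Q l)⁻¹ := by
        simp [hGdef, Nat.not_lt.mpr hk]
      rcases eq_or_lt_of_le hk with heq | hlt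
      · -- k = n
        subst heq
        have hGk1 : G (l + 1 + 1) = 0 := by
          simp [hGdef]
        have hPn : P (l + 1) = 1 := by simp [hPdef]
        rw [hGk1, hGk, hQk, hPn]
        have hdx : h (l + 1) - h 0 = -(h 0 - h (l + 1)) := by ring
        rw [hdx]
        exact aux_top _ _ (hx (l + 1) (Nat.le_add_left 1 l)) (hQne l)
      · -- k < n
        have hGk1 : G (l + 1 + 1) = ((h n - h 0) * P (l + 1 + 1) * Q (l + 1))⁻¹ := by
          simp [hGdef, Nat.not_lt.mpr hlt]
        have hPk : P (l + 1) = (h n - h (l + 1)) * P (l + 1 + 1) := by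
          simpa [hPdef] using
            Finset.prod_eq_prod_Ico_succ_bot hlt (fun j => h n - h j)
        rw [hGk1, hGk, hQk, hPk]
        exact aux_mid _ _ _ _ _ (hx (l + 1) (Nat.le_add_left 1 l)) (hy (l + 1) hlt)
          (hPne (l + 1 + 1)) (hQne l) hd (by ring)
  have tele : ∑ k ∈ range (n + 1), (P k * Q k)⁻¹ = 0 := by
    have hts := Finset.sum_range_sub G (n + 1)
    have hsum : ∑ k ∈ range (n + 1), (P k * Q k)⁻¹
        = ∑ k ∈ range (n + 1), (G (k + 1) - G k) := by
      refine Finset.sum_congr rfl fun k hk => ?_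
      exact key k (Nat.lt_succ_iff.mp (mem_range.mp hk))
    rw [hsum, hts]
    have hGn1 : G (n + 1) = 0 := by simp [hGdef]
    have hG0 : G 0 = 0 := by simp [hGdef]
    rw [hGn1, hG0, sub_zero]
  -- factor out the g's
  have factor : ∀ k, k ≤ n →
      (∏ j ∈ Ico k n, g (j + 1) / (h n - h j)) *
        (∏ j ∈ Icc 1 k, g j / (h 0 - h j))
      = (∏ j ∈ Icc 1 n, g j) * (P k * Q k)⁻¹ := by
    intro k hk
    have e1 : (∏ j ∈ Ico k n, g (j + 1) / (h n - h j))
        = (∏ j ∈ Ico k n, g (j + 1)) / P k := Finset.prod_div_distrib _ _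
    have e2 : (∏ j ∈ Icc 1 k, g j / (h 0 - h j))
        = (∏ j ∈ Icc 1 k, g j) / Q k := Finset.prod_div_distrib _ _
    have e3 : (∏ j ∈ Ico k n, g (j + 1)) = ∏ j ∈ Ioc k n, g j := by
      rw [← Finset.Ico_add_one_add_one_eq_Ioc]
      exact Finset.prod_Ico_add' g k n 1
    have hicc : ∀ m : ℕ, Finset.Icc 1 m = Finset.Ioc 0 m := by
      intro m; ext a; simp; omega
    have e4 : (∏ j ∈ Icc 1 k, g j) * (∏ j ∈ Ioc k n, g j) = ∏ j ∈ Icc 1 n, g j := by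
      rw [hicc k, hicc n]
      exact Finset.prod_Ioc_consecutive _ (Nat.zero_le k) hk
    rw [e1, e2, e3]
    rw [div_mul_div_comm, ← e4, div_eq_mul_inv]
    ring
  calc ∑ k ∈ range (n + 1),
        (∏ j ∈ Ico k n, g (j + 1) / (h n - h j)) *
          (∏ j ∈ Icc 1 k, g j / (h 0 - h j))
      = ∑ k ∈ range (n + 1), (∏ j ∈ Icc 1 n, g j) * (P k * Q k)⁻¹ := by
        refine Finset.sum_congr rfl fun k hk => ?_
        exact factor k (Nat.lt_succ_iff.mp (mem_range.mp hk))
    _ = (∏ j ∈ Icc 1 n, g j) * ∑ k ∈ range (n + 1), (P k * Q k)⁻¹ := by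
        rw [Finset.mul_sum]
    _ = 0 := by rw [tele, mul_zero]
end

section
/- Suppose the monic polynomials u_n = Σ_{k=0}^n c_{n,k} v_k (with c_{n,k} as in the eigenfunction construction) satisfy a three-term recurrence u_{n+1}(t) = (t - β_n) u_n(t) - α_n u_{n-1}(t). Then β_n = x_n + g_{n+1}/(h_n - h_{n+1}) - g_n/(h_{n-1} - h_n) and α_n = [g_n/(h_{n-1} - h_n)] · [g_{n-1}/(h_{n-2} - h_n) - g_n/(h_{n-1} - h_n) + g_{n+1}/(h_{n-1} - h_{n+1}) + x_n - x_{n-1}]. -/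
open Polynomial Finset

/-- The Newtonian basis polynomials `v_n(t) = (t - x_0) ⋯ (t - x_{n-1})`. -/
noncomputable def newtonPoly (x : ℕ → ℂ) (n : ℕ) : Polynomial ℂ :=
  ∏ i ∈ Finset.range n, (X - C (x i))

/-- The monic eigenfunctions `u_n = Σ_{k=0}^n c_{n,k} v_k`,
`c_{n,k} = Π_{j=k}^{n-1} g_{j+1}/(h_n - h_j)`. -/
noncomputable def eigenPoly (x h g : ℕ → ℂ) (n : ℕ) : Polynomial ℂ :=
  ∑ k ∈ Finset.range (n + 1),
    (∏ j ∈ Finset.Ico k n, g (j + 1) / (h n - h j)) • newtonPoly x k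

noncomputable def Snum (x : ℕ → ℂ) (n : ℕ) : ℂ := ∑ i ∈ Finset.range n, x i
noncomputable def E2 (x : ℕ → ℂ) (n : ℕ) : ℂ := ∑ i ∈ Finset.range n, x i * Snum x i
noncomputable def cc (h g : ℕ → ℂ) (n k : ℕ) : ℂ := ∏ j ∈ Finset.Ico k n, g (j + 1) / (h n - h j)

lemma eigen_def (x h g : ℕ → ℂ) (n : ℕ) :
    eigenPoly x h g n = ∑ k ∈ Finset.range (n + 1), cc h g n k • newtonPoly x k := rfl

lemma newton_succ (x : ℕ → ℂ) (n : ℕ) :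
    newtonPoly x (n + 1) = newtonPoly x n * (X - C (x n)) := prod_range_succ _ _

lemma newton_monic (x : ℕ → ℂ) (n : ℕ) : (newtonPoly x n).Monic :=
  monic_prod_of_monic _ _ fun i _ => monic_X_sub_C _

lemma newton_natDegree (x : ℕ → ℂ) (n : ℕ) : (newtonPoly x n).natDegree = n := by
  induction n with
  | zero => simp [newtonPoly]
  | succ p ih =>
    rw [newton_succ, Monic.natDegree_mul (newton_monic x p) (monic_X_sub_C _), ih,
      natDegree_X_sub_C]

lemma newton_coeff_self (x : ℕ → ℂ) (n : ℕ) : (newtonPoly x n).coeff n = 1 := by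
  have := (newton_monic x n).coeff_natDegree
  rwa [newton_natDegree] at this

lemma newton_coeff_lt (x : ℕ → ℂ) {n k : ℕ} (hk : n < k) : (newtonPoly x n).coeff k = 0 :=
  coeff_eq_zero_of_natDegree_lt (by rwa [newton_natDegree])

lemma Snum_succ (x : ℕ → ℂ) (n : ℕ) : Snum x (n + 1) = Snum x n + x n := sum_range_succ _ _
lemma E2_succ (x : ℕ → ℂ) (n : ℕ) : E2 x (n + 1) = E2 x n + x n * Snum x n := sum_range_succ _ _

lemma newton_coeff_one (x : ℕ → ℂ) (n : ℕ) :
    (newtonPoly x (n + 1)).coeff n = -Snum x (n + 1) := by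
  induction n with
  | zero => simp [newtonPoly, Snum]
  | succ p ih =>
    rw [newton_succ, coeff_mul_X_sub_C, ih, newton_coeff_self, Snum_succ x (p + 1)]
    ring

lemma newton_coeff_two (x : ℕ → ℂ) (n : ℕ) :
    (newtonPoly x (n + 2)).coeff n = E2 x (n + 2) := by
  induction n with
  | zero =>
    simp only [newtonPoly, E2, Snum]
    simp [prod_range_succ, sum_range_succ, mul_coeff_zero]
    ring
  | succ p ih =>
    rw [newton_succ, coeff_mul_X_sub_C, ih, newton_coeff_one, E2_succ x (p + 2)]
    ring

lemma cc_self (h g : ℕ → ℂ) (n : ℕ) : cc h g n n = 1 := by simp [cc]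

lemma cc_one (h g : ℕ → ℂ) (k : ℕ) : cc h g (k + 1) k = g (k + 1) / (h (k + 1) - h k) := by
  rw [cc, Nat.Ico_succ_singleton, prod_singleton]

lemma cc_two (h g : ℕ → ℂ) (k : ℕ) :
    cc h g (k + 2) k = g (k + 1) / (h (k + 2) - h k) * (g (k + 2) / (h (k + 2) - h (k + 1))) := by
  rw [cc, prod_Ico_succ_top (by omega), Nat.Ico_succ_singleton, prod_singleton]

lemma eigen_coeff_lt (x h g : ℕ → ℂ) {n k : ℕ} (hk : n < k) :
    (eigenPoly x h g n).coeff k = 0 := by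
  rw [eigen_def, finset_sum_coeff]
  refine sum_eq_zero fun i hi => ?_
  rw [coeff_smul, newton_coeff_lt x (by simp at hi; omega), smul_zero]

lemma eigen_coeff_self (x h g : ℕ → ℂ) (n : ℕ) : (eigenPoly x h g n).coeff n = 1 := by
  rw [eigen_def, finset_sum_coeff, sum_range_succ]
  rw [sum_eq_zero fun i hi => by
    rw [coeff_smul, newton_coeff_lt x (by simp at hi; omega), smul_zero]]
  simp [cc_self, newton_coeff_self]

lemma eigen_coeff_one (x h g : ℕ → ℂ) (m : ℕ) :
    (eigenPoly x h g (m + 1)).coeff m = cc h g (m + 1) m - Snum x (m + 1) := by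
  rw [eigen_def, finset_sum_coeff, sum_range_succ, sum_range_succ]
  rw [sum_eq_zero fun i hi => by
    rw [coeff_smul, newton_coeff_lt x (by simp at hi; omega), smul_zero]]
  rw [coeff_smul, coeff_smul, newton_coeff_self, newton_coeff_one, cc_self]
  simp [smul_eq_mul]
  ring

lemma eigen_coeff_two (x h g : ℕ → ℂ) (m : ℕ) :
    (eigenPoly x h g (m + 2)).coeff m
      = cc h g (m + 2) m - cc h g (m + 2) (m + 1) * Snum x (m + 1) + E2 x (m + 2) := by
  rw [eigen_def, finset_sum_coeff, sum_range_succ, sum_range_succ, sum_range_succ]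
  rw [sum_eq_zero fun i hi => by
    rw [coeff_smul, newton_coeff_lt x (by simp at hi; omega), smul_zero]]
  rw [coeff_smul, coeff_smul, coeff_smul, newton_coeff_self, newton_coeff_one,
    newton_coeff_two, cc_self]
  simp [smul_eq_mul]
  ring

set_option maxHeartbeats 2000000 in
/-- If the monic polynomials `u_n = Σ_{k=0}^n c_{n,k} v_k` satisfy a three-term
recurrence `u_{n+1}(t) = (t - β_n) u_n(t) - α_n u_{n-1}(t)` for `n ≥ 1`, then
`β_n = x_n + g_{n+1}/(h_n - h_{n+1}) - g_n/(h_{n-1} - h_n)` and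
`α_n = g_n/(h_{n-1} - h_n) · (g_{n-1}/(h_{n-2} - h_n) - g_n/(h_{n-1} - h_n)
      + g_{n+1}/(h_{n-1} - h_{n+1}) + x_n - x_{n-1})`. -/
theorem three_term_recurrence_coefficients
    (x h g : ℕ → ℂ) (hx : Function.Injective x) (hh : Function.Injective h)
    (hg0 : g 0 = 0)
    (α β : ℕ → ℂ)
    (hrec : ∀ n : ℕ, 1 ≤ n →
      eigenPoly x h g (n + 1)
        = (X - C (β n)) * eigenPoly x h g n - C (α n) * eigenPoly x h g (n - 1)) :
    ∀ n : ℕ, 1 ≤ n →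
      β n = x n + g (n + 1) / (h n - h (n + 1)) - g n / (h (n - 1) - h n) ∧
      α n = g n / (h (n - 1) - h n) *
        (g (n - 1) / (h (n - 2) - h n) - g n / (h (n - 1) - h n)
          + g (n + 1) / (h (n - 1) - h (n + 1)) + x n - x (n - 1)) := by
  have hne : ∀ i j : ℕ, i ≠ j → h i - h j ≠ 0 := fun i j hij => sub_ne_zero.mpr fun e => hij (hh e)
  intro n hn
  obtain ⟨m, rfl⟩ : ∃ m, n = m + 1 := ⟨n - 1, (Nat.succ_pred_eq_of_pos hn).symm⟩
  have hrec1 := hrec (m + 1) hn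
  rw [Nat.add_sub_cancel, sub_mul] at hrec1
  have E1 := congrArg (fun p : Polynomial ℂ => p.coeff (m + 1)) hrec1
  simp only [coeff_sub, coeff_C_mul, coeff_X_mul] at E1
  rw [eigen_coeff_one x h g (m + 1), eigen_coeff_one x h g m, eigen_coeff_self,
    eigen_coeff_lt x h g (Nat.lt_succ_self m)] at E1
  have hS := Snum_succ x (m + 1)
  have hβ : β (m + 1) = x (m + 1) + cc h g (m + 1) m - cc h g (m + 2) (m + 1) := by
    linear_combination E1 + hS
  constructor
  · rw [hβ, cc_one, cc_one, Nat.add_sub_cancel]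
    have d1 := hne (m + 1) m (by omega)
    have d2 := hne (m + 2) (m + 1) (by omega)
    have d3 := hne (m + 1) (m + 2) (by omega)
    have d4 := hne m (m + 1) (by omega)
    field_simp
    ring
  · match m with
    | 0 =>
      simp only [show (0:ℕ) + 1 = 1 from rfl, show (0:ℕ) + 2 = 2 from rfl,
        show (0:ℕ) + 1 + 1 = 2 from rfl] at hβ hrec1 ⊢
      have E0 := congrArg (fun p : Polynomial ℂ => p.coeff 0) hrec1
      simp only [coeff_sub, coeff_C_mul, mul_coeff_zero, coeff_X_zero, zero_mul,
        coeff_C_zero] at E0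
      rw [eigen_coeff_two x h g 0, eigen_coeff_one x h g 0, eigen_coeff_self] at E0
      have hα : α 1 = -(β 1 * (cc h g 1 0 - Snum x 1))
          - (cc h g 2 0 - cc h g 2 1 * Snum x 1 + E2 x 2) := by
        linear_combination E0
      have c1 : cc h g 1 0 = g 1 / (h 1 - h 0) := cc_one h g 0
      have c2 : cc h g 2 1 = g 2 / (h 2 - h 1) := cc_one h g 1
      have c3 : cc h g 2 0 = g 1 / (h 2 - h 0) * (g 2 / (h 2 - h 1)) := cc_two h g 0
      have hS1 : Snum x 1 = x 0 := by simp [Snum]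
      have hE2 : E2 x 2 = x 1 * x 0 := by simp [E2, Snum, sum_range_succ]
      rw [hα, hβ, c1, c2, c3, hS1, hE2]
      show _ = g 1 / (h 0 - h 1) *
        (g 0 / (h 0 - h 1) - g 1 / (h 0 - h 1) + g 2 / (h 0 - h 2) + x 1 - x 0)
      rw [hg0]
      have d1 := hne 1 0 (by omega)
      have d2 := hne 2 1 (by omega)
      have d3 := hne 2 0 (by omega)
      have d4 := hne 0 1 (by omega)
      have d5 := hne 0 2 (by omega)
      field_simp
      ring
    | p + 1 =>
      simp only [show p + 1 + 1 = p + 2 from rfl, show p + 1 + 2 = p + 3 from rfl,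
        show p + 1 + 1 + 1 = p + 3 from rfl, show p + 2 + 1 = p + 3 from rfl] at hβ hrec1 ⊢
      have E3 := congrArg (fun q : Polynomial ℂ => q.coeff (p + 1)) hrec1
      simp only [coeff_sub, coeff_C_mul, coeff_X_mul] at E3
      rw [eigen_coeff_two x h g (p + 1), eigen_coeff_two x h g p,
        eigen_coeff_one x h g (p + 1), eigen_coeff_self] at E3
      simp only [show p + 1 + 1 = p + 2 from rfl, show p + 1 + 2 = p + 3 from rfl] at E3
      have hα : α (p + 2) =
          (cc h g (p + 2) p - cc h g (p + 2) (p + 1) * Snum x (p + 1) + E2 x (p + 2))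
          - β (p + 2) * (cc h g (p + 2) (p + 1) - Snum x (p + 2))
          - (cc h g (p + 3) (p + 1) - cc h g (p + 3) (p + 2) * Snum x (p + 2) + E2 x (p + 3)) := by
        linear_combination E3
      have c1 : cc h g (p + 2) (p + 1) = g (p + 2) / (h (p + 2) - h (p + 1)) := cc_one h g (p + 1)
      have c2 : cc h g (p + 3) (p + 2) = g (p + 3) / (h (p + 3) - h (p + 2)) := cc_one h g (p + 2)
      have c3 : cc h g (p + 2) p
          = g (p + 1) / (h (p + 2) - h p) * (g (p + 2) / (h (p + 2) - h (p + 1))) := cc_two h g p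
      have c4 : cc h g (p + 3) (p + 1)
          = g (p + 2) / (h (p + 3) - h (p + 1)) * (g (p + 3) / (h (p + 3) - h (p + 2))) :=
        cc_two h g (p + 1)
      have hE2 : E2 x (p + 3) = E2 x (p + 2) + x (p + 2) * Snum x (p + 2) := E2_succ x (p + 2)
      have hS2 : Snum x (p + 2) = Snum x (p + 1) + x (p + 1) := Snum_succ x (p + 1)
      rw [hα, hβ, c1, c2, c3, c4, hE2, hS2]
      show _ = g (p + 2) / (h (p + 1) - h (p + 2)) *
        (g (p + 1) / (h p - h (p + 2)) - g (p + 2) / (h (p + 1) - h (p + 2))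
          + g (p + 3) / (h (p + 1) - h (p + 3)) + x (p + 2) - x (p + 1))
      have d1 := hne (p + 2) p (by omega)
      have d2 := hne (p + 2) (p + 1) (by omega)
      have d3 := hne (p + 3) (p + 1) (by omega)
      have d4 := hne (p + 3) (p + 2) (by omega)
      have d5 := hne (p + 1) (p + 2) (by omega)
      have d6 := hne p (p + 2) (by omega)
      have d7 := hne (p + 1) (p + 3) (by omega)
      field_simp
      ring
end

section
/- Let x = q^n. The rational function α_n = (x-1)(a_1 x - q a_2) p_1(x) p_2(x) / [(a_1 x^2 - a_2)(a_1 x^2 - q a_2)^2 (a_1 x^2 - q^2 a_2)], with p_1(x) = (a_1 x - a_2)(b_1 x^2 + b_0 q x + b_2 q^2) + q x (s_1 x - s_2) and p_2(x) = -(a_1^2 x^3 / (q^2 a_2)) p_1(q a_2 / (a_1 x)), is invariant under the substitution x → q a_2/(a_1 x). -/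
/-- `p_1(x) = (a₁ x - a₂)(b₁ x² + b₀ q x + b₂ q²) + q x (s₁ x - s₂)`. -/
noncomputable def pOne (q a1 a2 b0 b1 b2 s1 s2 x : ℂ) : ℂ :=
  (a1 * x - a2) * (b1 * x ^ 2 + b0 * q * x + b2 * q ^ 2) + q * x * (s1 * x - s2)

/-- `p_2(x) = -(a₁² x³/(q² a₂)) p_1(q a₂/(a₁ x))`. -/
noncomputable def pTwo (q a1 a2 b0 b1 b2 s1 s2 x : ℂ) : ℂ :=
  -(a1 ^ 2 * x ^ 3 / (q ^ 2 * a2)) * pOne q a1 a2 b0 b1 b2 s1 s2 (q * a2 / (a1 * x))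

/-- The recurrence coefficient `α` as a rational function of `x = qⁿ`. -/
noncomputable def alphaRat (q a1 a2 b0 b1 b2 s1 s2 x : ℂ) : ℂ :=
  (x - 1) * (a1 * x - q * a2) * pOne q a1 a2 b0 b1 b2 s1 s2 x *
      pTwo q a1 a2 b0 b1 b2 s1 s2 x /
    ((a1 * x ^ 2 - a2) * (a1 * x ^ 2 - q * a2) ^ 2 * (a1 * x ^ 2 - q ^ 2 * a2))

set_option maxHeartbeats 1000000

/-- The rational function `α` is invariant under the substitution `x → q a₂/(a₁ x)`. -/
theorem alpha_invariant_under_substitution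
    (q a1 a2 b0 b1 b2 s1 s2 x : ℂ)
    (hq : q ≠ 0) (ha1 : a1 ≠ 0) (ha2 : a2 ≠ 0) (hx : x ≠ 0)
    (h1 : a1 * x ^ 2 - a2 ≠ 0) (h2 : a1 * x ^ 2 - q * a2 ≠ 0)
    (h3 : a1 * x ^ 2 - q ^ 2 * a2 ≠ 0) :
    alphaRat q a1 a2 b0 b1 b2 s1 s2 (q * a2 / (a1 * x))
      = alphaRat q a1 a2 b0 b1 b2 s1 s2 x := by
  obtain ⟨y, hy⟩ : ∃ y, y = q * a2 / (a1 * x) := ⟨_, rfl⟩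
  rw [← hy]
  have hxy : q * a2 / (a1 * y) = x := by
    rw [hy]; field_simp
  have h1' : a2 - a1 * x ^ 2 ≠ 0 := fun h => h1 (by linear_combination -h)
  have h2' : q * a2 - a1 * x ^ 2 ≠ 0 := fun h => h2 (by linear_combination -h)
  have h3' : q ^ 2 * a2 - a1 * x ^ 2 ≠ 0 := fun h => h3 (by linear_combination -h)
  have eA : (y - 1) * (a1 * y - q * a2) * (-(a1 ^ 2 * y ^ 3 / (q ^ 2 * a2)))
      = (q * a2 - a1 * x) * (x - 1) * q ^ 2 * a2 ^ 3 / (a1 ^ 2 * x ^ 5) := by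
    rw [hy]
    field_simp
    ring
  have eD : (a1 * y ^ 2 - a2) * (a1 * y ^ 2 - q * a2) ^ 2 * (a1 * y ^ 2 - q ^ 2 * a2)
      = a2 ^ 4 * q ^ 4 * ((q ^ 2 * a2 - a1 * x ^ 2) * (q * a2 - a1 * x ^ 2) ^ 2 *
          (a2 - a1 * x ^ 2)) / (a1 ^ 4 * x ^ 8) := by
    rw [hy]; field_simp
  have eB : (x - 1) * (a1 * x - q * a2) * (-(a1 ^ 2 * x ^ 3 / (q ^ 2 * a2)))
      = -((x - 1) * (a1 * x - q * a2) * a1 ^ 2 * x ^ 3) / (q ^ 2 * a2) := by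
    field_simp
  have hDy : (a1 * y ^ 2 - a2) * (a1 * y ^ 2 - q * a2) ^ 2 * (a1 * y ^ 2 - q ^ 2 * a2) ≠ 0 := by
    rw [eD]
    exact div_ne_zero
      (mul_ne_zero (mul_ne_zero (pow_ne_zero 4 ha2) (pow_ne_zero 4 hq))
        (mul_ne_zero (mul_ne_zero h3' (pow_ne_zero 2 h2')) h1'))
      (mul_ne_zero (pow_ne_zero 4 ha1) (pow_ne_zero 8 hx))
  have hDx : (a1 * x ^ 2 - a2) * (a1 * x ^ 2 - q * a2) ^ 2 * (a1 * x ^ 2 - q ^ 2 * a2) ≠ 0 :=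
    mul_ne_zero (mul_ne_zero h1 (pow_ne_zero 2 h2)) h3
  have key : (y - 1) * (a1 * y - q * a2) * (-(a1 ^ 2 * y ^ 3 / (q ^ 2 * a2))) /
      ((a1 * y ^ 2 - a2) * (a1 * y ^ 2 - q * a2) ^ 2 * (a1 * y ^ 2 - q ^ 2 * a2))
      = (x - 1) * (a1 * x - q * a2) * (-(a1 ^ 2 * x ^ 3 / (q ^ 2 * a2))) /
      ((a1 * x ^ 2 - a2) * (a1 * x ^ 2 - q * a2) ^ 2 * (a1 * x ^ 2 - q ^ 2 * a2)) := by
    rw [div_eq_div_iff hDy hDx, eA, eD, eB]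
    field_simp
    ring
  simp only [alphaRat, pTwo, hxy]
  rw [← hy]
  calc ((y - 1) * (a1 * y - q * a2) * pOne q a1 a2 b0 b1 b2 s1 s2 y *
        (-(a1 ^ 2 * y ^ 3 / (q ^ 2 * a2)) * pOne q a1 a2 b0 b1 b2 s1 s2 x)) /
      ((a1 * y ^ 2 - a2) * (a1 * y ^ 2 - q * a2) ^ 2 * (a1 * y ^ 2 - q ^ 2 * a2))
      = pOne q a1 a2 b0 b1 b2 s1 s2 x * pOne q a1 a2 b0 b1 b2 s1 s2 y *
        ((y - 1) * (a1 * y - q * a2) * (-(a1 ^ 2 * y ^ 3 / (q ^ 2 * a2))) /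
        ((a1 * y ^ 2 - a2) * (a1 * y ^ 2 - q * a2) ^ 2 * (a1 * y ^ 2 - q ^ 2 * a2))) := by
        ring
    _ = pOne q a1 a2 b0 b1 b2 s1 s2 x * pOne q a1 a2 b0 b1 b2 s1 s2 y *
        ((x - 1) * (a1 * x - q * a2) * (-(a1 ^ 2 * x ^ 3 / (q ^ 2 * a2))) /
        ((a1 * x ^ 2 - a2) * (a1 * x ^ 2 - q * a2) ^ 2 * (a1 * x ^ 2 - q ^ 2 * a2))) := by
        rw [key]
    _ = ((x - 1) * (a1 * x - q * a2) * pOne q a1 a2 b0 b1 b2 s1 s2 x *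
        (-(a1 ^ 2 * x ^ 3 / (q ^ 2 * a2)) * pOne q a1 a2 b0 b1 b2 s1 s2 y)) /
      ((a1 * x ^ 2 - a2) * (a1 * x ^ 2 - q * a2) ^ 2 * (a1 * x ^ 2 - q ^ 2 * a2)) := by
        ring
end

section
/- Let P = (a_1, a_2, b_0, 0, 0, s_1, s_2) with a_1 ≠ 0 and a_2 ≠ 0, and let P_1 = (a_1, a_2, b_0, b_1, 0, ŝ_1, ŝ_2) with b_1 = -(b_0 a_2 + s_2)/a_2, ŝ_1 = (q s_1 - b_0 a_2 - s_2)/q, ŝ_2 = -b_0 a_2. Then P and P_1 yield the same recurrence coefficient sequences (α_n)_{n≥1} and (β_n)_{n≥0}, where α_n and β_n are given by the rational-function formulas in the parameters. -/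
noncomputable def dConst (q a1 a2 b0 b1 b2 s1 s2 : ℂ) : ℂ :=
  (q + 1) * (q * a1 * b2 + a2 * b1) - q * (s1 + s2 + (a1 + a2) * b0)

noncomputable def betaRat (q a1 a2 b0 b1 b2 s1 s2 x : ℂ) : ℂ :=
  (q * b0 * (x ^ 2 - 1) * (a1 ^ 2 * x ^ 2 - a2 ^ 2)
      + dConst q a1 a2 b0 b1 b2 s1 s2 * x * (x - 1) * (a1 * x - a2)
      - (q * s1 - s2) * (a1 - q * a2) * x ^ 2) /
    ((a1 * q * x ^ 2 - a2) * (a1 * x ^ 2 - q * a2))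

lemma pTwo_eq (q a1 a2 b0 b1 b2 s1 s2 x : ℂ)
    (hq0 : q ≠ 0) (ha1 : a1 ≠ 0) (ha2 : a2 ≠ 0) (hx : x ≠ 0) :
    pTwo q a1 a2 b0 b1 b2 s1 s2 x
      = -((q - x) * (b1 * a2 ^ 2 + b0 * a1 * a2 * x + b2 * a1 ^ 2 * x ^ 2)
          + x * (q * a2 * s1 - a1 * s2 * x)) := by
  have e1 : a1 * (q * a2 / (a1 * x)) - a2 = a2 * (q - x) / x := by
    field_simp
  have e2 : b1 * (q * a2 / (a1 * x)) ^ 2 + b0 * q * (q * a2 / (a1 * x)) + b2 * q ^ 2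
      = q ^ 2 * (b1 * a2 ^ 2 + b0 * a1 * a2 * x + b2 * a1 ^ 2 * x ^ 2) / (a1 ^ 2 * x ^ 2) := by
    field_simp
  have e3 : q * (q * a2 / (a1 * x)) * (s1 * (q * a2 / (a1 * x)) - s2)
      = q ^ 2 * a2 * (q * a2 * s1 - a1 * s2 * x) / (a1 ^ 2 * x ^ 2) := by
    field_simp
  have d1 : x * (a1 ^ 2 * x ^ 2) ≠ 0 := by simp [ha1, hx]
  have d2 : (a1 : ℂ) ^ 2 * x ^ 2 ≠ 0 := by simp [ha1, hx]
  rw [pTwo, pOne, e1, e2, e3, div_mul_div_comm, div_add_div _ _ d1 d2, neg_mul,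
    div_mul_div_comm, ← neg_div, div_eq_iff (by simp [hq0, ha1, ha2, hx])]
  ring

set_option maxHeartbeats 1000000 in
lemma aux_alpha (q a1 a2 b0 s1 s2 x : ℂ)
    (hq0 : q ≠ 0) (ha1 : a1 ≠ 0) (ha2 : a2 ≠ 0) (hx : x ≠ 0) :
    alphaRat q a1 a2 b0 0 0 s1 s2 x
      = alphaRat q a1 a2 b0 (-(b0 * a2 + s2) / a2) 0
          ((q * s1 - b0 * a2 - s2) / q) (-(b0 * a2)) x := by
  simp only [alphaRat, pOne]
  rw [pTwo_eq _ _ _ _ _ _ _ _ _ hq0 ha1 ha2 hx, pTwo_eq _ _ _ _ _ _ _ _ _ hq0 ha1 ha2 hx]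
  congr 1
  field_simp
  ring

set_option maxHeartbeats 1000000 in
lemma aux_beta (q a1 a2 b0 s1 s2 x : ℂ)
    (hq0 : q ≠ 0) (ha2 : a2 ≠ 0) :
    betaRat q a1 a2 b0 0 0 s1 s2 x
      = betaRat q a1 a2 b0 (-(b0 * a2 + s2) / a2) 0
          ((q * s1 - b0 * a2 - s2) / q) (-(b0 * a2)) x := by
  simp only [betaRat, dConst]
  congr 1
  field_simp
  ring

/-- The parameter vectors `P = (a₁, a₂, b₀, 0, 0, s₁, s₂)` and
`P₁ = (a₁, a₂, b₀, b₁, 0, ŝ₁, ŝ₂)` with `b₁ = -(b₀ a₂ + s₂)/a₂`,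
`ŝ₁ = (q s₁ - b₀ a₂ - s₂)/q`, `ŝ₂ = -b₀ a₂` yield the same recurrence coefficient
sequences `(αₙ)_{n≥1}` and `(βₙ)_{n≥0}`. -/
theorem parameter_vectors_yield_same_recurrence_coefficients
    (q a1 a2 b0 s1 s2 : ℂ)
    (hq0 : q ≠ 0) (hq1 : q ≠ 1) (hqm1 : q ≠ -1) (ha1 : a1 ≠ 0) (ha2 : a2 ≠ 0)
    (hden : ∀ n : ℕ,
      a1 * (q ^ n) ^ 2 - a2 ≠ 0 ∧ a1 * (q ^ n) ^ 2 - q * a2 ≠ 0 ∧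
      a1 * (q ^ n) ^ 2 - q ^ 2 * a2 ≠ 0 ∧ a1 * q * (q ^ n) ^ 2 - a2 ≠ 0) :
    (∀ n : ℕ, 1 ≤ n →
      alphaRat q a1 a2 b0 0 0 s1 s2 (q ^ n)
        = alphaRat q a1 a2 b0 (-(b0 * a2 + s2) / a2) 0
            ((q * s1 - b0 * a2 - s2) / q) (-(b0 * a2)) (q ^ n)) ∧
    (∀ n : ℕ,
      betaRat q a1 a2 b0 0 0 s1 s2 (q ^ n)
        = betaRat q a1 a2 b0 (-(b0 * a2 + s2) / a2) 0
            ((q * s1 - b0 * a2 - s2) / q) (-(b0 * a2)) (q ^ n)) := by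
  exact ⟨fun n _ => aux_alpha q a1 a2 b0 s1 s2 (q ^ n) hq0 ha1 ha2 (pow_ne_zero _ hq0),
    fun n => aux_beta q a1 a2 b0 s1 s2 (q ^ n) hq0 ha2⟩
end

section
/- The function (q, y_1, y_2, y_3, z_1, z_2) ↦ ρ(k,j) defined by ρ(k,j) = μ(k) (y_1;q)_j (y_2;q)_j (y_3;q)_j q^j / [(q;q)_{j-k} (z_1;q)_j (q^k z_2;q)_j], with μ(k) = (-1)^k q^{binom(k,2)} (1 - q^{2k-1} z_2)/[(q;q)_k (1 - q^{k-1} z_2)], satisfies ρ(k,j)(1/q, 1/y_1, 1/y_2, 1/y_3, 1/z_1, 1/z_2) = ρ(k,j)(q, y_1, y_2, y_3, z_1, z_2) for all j ≥ k ≥ 0, provided z_1 z_2 = q y_1 y_2 y_3 and all parameters are nonzero with nonvanishing denominators. -/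
open Finset

/-- The `q`-Pochhammer symbol `(t;q)_m = Π_{i=0}^{m-1}(1 - qⁱ t)`. -/
noncomputable def qPoch (t q : ℂ) (m : ℕ) : ℂ :=
  ∏ i ∈ Finset.range m, (1 - q ^ i * t)

/-- `μ(0) = 1` and
`μ(k) = (-1)^k q^(k(k-1)/2) (1 - q^{2k-1} z₂) / [(q;q)_k (1 - q^{k-1} z₂)]` for `k ≥ 1`. -/
noncomputable def muCoeff (q z2 : ℂ) (k : ℕ) : ℂ :=
  if k = 0 then 1 else
    (-1) ^ k * q ^ (k * (k - 1) / 2) * (1 - q ^ (2 * k - 1) * z2) /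
      (qPoch q q k * (1 - q ^ (k - 1) * z2))

lemma tri_succ (m : ℕ) : (m+1)*((m+1)-1)/2 = m*(m-1)/2 + m := by
  cases m with
  | zero => rfl
  | succ n =>
    have h : (n+2)*(n+1) = (n+1)*n + 2*(n+1) := by ring
    simp only [Nat.add_sub_cancel]
    rw [h, Nat.add_mul_div_left _ _ (by norm_num : 0 < 2)]

lemma tri (k d : ℕ) : (k+d)*((k+d)-1)/2 = k*(k-1)/2 + d*(d-1)/2 + k*d := by
  induction d with
  | zero => simp
  | succ n ih =>
    rw [show k+(n+1) = (k+n)+1 by omega, tri_succ (k+n), ih, tri_succ n, Nat.mul_succ]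
    generalize k*(k-1)/2 = a
    generalize n*(n-1)/2 = b
    generalize k*n = c
    omega

lemma qPoch_succ (t q : ℂ) (m : ℕ) :
    qPoch t q (m+1) = qPoch t q m * (1 - q^m * t) := Finset.prod_range_succ _ _

lemma qPoch_ne_zero {t q : ℂ} (m : ℕ) (h : ∀ i, 1 - q^i*t ≠ 0) : qPoch t q m ≠ 0 := by
  unfold qPoch
  exact Finset.prod_ne_zero_iff.mpr fun i _ => h i

lemma one_sub_inv (q z : ℂ) (hq : q ≠ 0) (hz : z ≠ 0) (m : ℕ) :
    1 - (q⁻¹)^m * z⁻¹ = -((q^m * z)⁻¹) * (1 - q^m * z) := by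
  have hqm : q^m ≠ 0 := pow_ne_zero _ hq
  rw [inv_pow, ← mul_inv, neg_mul, mul_sub, mul_one, inv_mul_cancel₀ (mul_ne_zero hqm hz)]
  ring

lemma qPoch_inv (q t : ℂ) (hq : q ≠ 0) (ht : t ≠ 0) (m : ℕ) :
    qPoch t⁻¹ q⁻¹ m = (-1)^m * (t ^ m)⁻¹ * (q ^ (m*(m-1)/2))⁻¹ * qPoch t q m := by
  induction m with
  | zero => simp [qPoch]
  | succ n ih =>
    rw [qPoch_succ, qPoch_succ, ih, one_sub_inv q t hq ht, tri_succ n, pow_add]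
    have hqn : (q:ℂ)^n ≠ 0 := pow_ne_zero _ hq
    have hqt : (q:ℂ)^(n*(n-1)/2) ≠ 0 := pow_ne_zero _ hq
    have htn : (t:ℂ)^n ≠ 0 := pow_ne_zero _ ht
    field_simp
    ring

lemma qPoch_inv' (q t : ℂ) (hq : q ≠ 0) (ht : t ≠ 0) (m : ℕ) :
    qPoch t⁻¹ q⁻¹ m = ((-1)^m * qPoch t q m) / (t ^ m * q ^ (m*(m-1)/2)) := by
  rw [qPoch_inv q t hq ht m]
  ring


lemma mu_formula (q z2 : ℂ) (h : 1 - z2 ≠ 0) (k : ℕ) :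
    muCoeff q z2 k =
      (-1)^k * q^(k*(k-1)/2) * (1 - q^(2*k-1)*z2) / (qPoch q q k * (1 - q^(k-1)*z2)) := by
  cases k with
  | zero => simp [muCoeff, qPoch]; exact (div_self h).symm
  | succ n => simp [muCoeff]

lemma mu_inv (q z2 : ℂ) (hq : q ≠ 0) (hz2 : z2 ≠ 0)
    (hqq : ∀ i : ℕ, 1 - q ^ (i + 1) ≠ 0) (hz2p : ∀ i : ℕ, 1 - q ^ i * z2 ≠ 0) (k : ℕ) :
    muCoeff q⁻¹ z2⁻¹ k = (1 - q^(2*k-1)*z2) / (qPoch q q k * (1 - q^(k-1)*z2)) := by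
  cases k with
  | zero =>
    have h := hz2p 0
    simp only [pow_zero, one_mul] at h
    simp [muCoeff, qPoch]
    exact (div_self h).symm
  | succ n =>
    have hQ : qPoch q q (n+1) ≠ 0 :=
      qPoch_ne_zero _ (fun i => by simpa [pow_succ] using hqq i)
    have hv : 1 - q^n * z2 ≠ 0 := hz2p n
    have hu : 1 - q^(2*n+1) * z2 ≠ 0 := hz2p _
    simp only [muCoeff, Nat.succ_ne_zero, if_false]
    rw [show 2*(n+1)-1 = 2*n+1 from by omega, show (n+1)-1 = n from rfl]
    rw [one_sub_inv q z2 hq hz2 (2*n+1), one_sub_inv q z2 hq hz2 n,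
      qPoch_inv q q hq hq (n+1), inv_pow]
    rw [show (n+1)-1 = n from rfl]
    have h1 : (q:ℂ)^(2*n+1) ≠ 0 := pow_ne_zero _ hq
    have h2 : (q:ℂ)^n ≠ 0 := pow_ne_zero _ hq
    have h3 : (q:ℂ)^(n+1) ≠ 0 := pow_ne_zero _ hq
    have h4 : (q:ℂ)^((n+1)*n/2) ≠ 0 := pow_ne_zero _ hq
    rw [div_eq_div_iff]
    · field_simp
      ring
    · exact mul_ne_zero (mul_ne_zero (mul_ne_zero (mul_ne_zero
        (pow_ne_zero _ (neg_ne_zero.mpr one_ne_zero)) (inv_ne_zero h3)) (inv_ne_zero h4)) hQ)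
        (mul_ne_zero (neg_ne_zero.mpr (inv_ne_zero (mul_ne_zero h2 hz2))) hv)
    · exact mul_ne_zero hQ hv


/-- `ρ(k,j) = μ(k) (y₁;q)_j (y₂;q)_j (y₃;q)_j qʲ / [(q;q)_{j-k} (z₁;q)_j (q^k z₂;q)_j]`. -/
noncomputable def rhoCoeff (q y1 y2 y3 z1 z2 : ℂ) (k j : ℕ) : ℂ :=
  muCoeff q z2 k * (qPoch y1 q j * qPoch y2 q j * qPoch y3 q j * q ^ j) /
    (qPoch q q (j - k) * qPoch z1 q j * qPoch (q ^ k * z2) q j)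

set_option maxHeartbeats 2000000 in
/-- The coefficients `ρ(k,j)` are invariant under the transformation
`(q, y₁, y₂, y₃, z₁, z₂) → (1/q, 1/y₁, 1/y₂, 1/y₃, 1/z₁, 1/z₂)`, provided
`z₁ z₂ = q y₁ y₂ y₃`, all parameters are nonzero, and no denominator vanishes. -/
theorem rho_invariant_under_parameter_inversion
    (q y1 y2 y3 z1 z2 : ℂ)
    (hq : q ≠ 0) (hy1 : y1 ≠ 0) (hy2 : y2 ≠ 0) (hy3 : y3 ≠ 0)
    (hz1 : z1 ≠ 0) (hz2 : z2 ≠ 0)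
    (hbal : z1 * z2 = q * y1 * y2 * y3)
    (hqq : ∀ i : ℕ, 1 - q ^ (i + 1) ≠ 0)
    (hz1p : ∀ i : ℕ, 1 - q ^ i * z1 ≠ 0)
    (hz2p : ∀ i : ℕ, 1 - q ^ i * z2 ≠ 0) :
    ∀ k j : ℕ, k ≤ j →
      rhoCoeff q⁻¹ y1⁻¹ y2⁻¹ y3⁻¹ z1⁻¹ z2⁻¹ k j = rhoCoeff q y1 y2 y3 z1 z2 k j := by
  intro k j hkj
  obtain ⟨d, rfl⟩ := Nat.exists_eq_add_of_le hkj
  have h1z2 : 1 - z2 ≠ 0 := by simpa using hz2p 0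
  have hQd : qPoch q q d ≠ 0 := qPoch_ne_zero _ (fun i => by simpa [pow_succ] using hqq i)
  have hQk : qPoch q q k ≠ 0 := qPoch_ne_zero _ (fun i => by simpa [pow_succ] using hqq i)
  have hC : qPoch z1 q (k+d) ≠ 0 := qPoch_ne_zero _ hz1p
  have hDk : qPoch (q^k * z2) q (k+d) ≠ 0 := qPoch_ne_zero _ (fun i => by
    have := hz2p (i+k); rwa [pow_add, mul_assoc] at this)
  have hv : 1 - q^(k-1) * z2 ≠ 0 := hz2p _
  have hqk : (q:ℂ)^k * z2 ≠ 0 := mul_ne_zero (pow_ne_zero _ hq) hz2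
  have hqy : (q*y1*y2 : ℂ) ≠ 0 := mul_ne_zero (mul_ne_zero hq hy1) hy2
  have hb : (z1*z2)^(k+d) = (q*y1*y2)^(k+d) * y3^(k+d) := by
    rw [hbal, ← mul_pow]
  have hy3v : (y3:ℂ)^(k+d) = (z1*z2)^(k+d) / (q*y1*y2)^(k+d) := by
    rw [hb, mul_comm, mul_div_assoc, div_self (pow_ne_zero _ hqy), mul_one]
  have heven : k*(k-1)/2*2 = k*(k-1) := by
    cases k with
    | zero => rfl
    | succ n =>
      simp only [Nat.add_sub_cancel]
      have h2 : 2 ∣ (n+1)*n := by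
        rw [Nat.mul_comm]
        exact (Nat.even_mul_succ_self n).two_dvd
      exact Nat.div_mul_cancel h2
  have hsplit : ((q:ℂ)^k*z2)^(k+d) = (q^(k*(k-1)/2))^2 * q^k * q^(k*d) * z2^(k+d) := by
    have e : k*(k+d) = k*(k-1)/2*2 + k + k*d := by
      cases k with
      | zero => simp
      | succ n =>
        simp only [Nat.add_sub_cancel] at heven ⊢
        have : (n+1)*(n+1+d) = (n+1)*n + (n+1) + (n+1)*d := by ring
        omega
    rw [mul_pow, ← pow_mul, e, pow_add, pow_add, pow_mul]
  simp only [rhoCoeff]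
  rw [Nat.add_sub_cancel_left]
  rw [mu_inv q z2 hq hz2 hqq hz2p, mu_formula q z2 h1z2]
  rw [show (q⁻¹)^k * z2⁻¹ = (q^k * z2)⁻¹ by rw [mul_inv, inv_pow]]
  rw [qPoch_inv' q y1 hq hy1, qPoch_inv' q y2 hq hy2, qPoch_inv' q y3 hq hy3,
      qPoch_inv' q q hq hq, qPoch_inv' q z1 hq hz1,
      qPoch_inv' q (q^k*z2) hq hqk,
      show ((q⁻¹:ℂ))^(k+d) = 1/q^(k+d) by rw [inv_pow, inv_eq_one_div],
      tri k d, hsplit]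
  set U := (1:ℂ) - q ^ (2*k-1) * z2 with hU
  set V := (1:ℂ) - q ^ (k-1) * z2 with hV
  clear_value U V
  clear hU hV
  simp only [div_mul_div_comm]
  simp only [div_div_eq_mul_div, div_mul_eq_mul_div, div_div]
  rw [div_eq_div_iff]
  rotate_left
  · repeat
      first
      | exact hQd | exact hQk | exact hC | exact hDk | exact hv
      | exact pow_ne_zero _ hq | exact pow_ne_zero _ hy1 | exact pow_ne_zero _ hy2
      | exact pow_ne_zero _ hy3 | exact pow_ne_zero _ hz1 | exact pow_ne_zero _ hz2
      | exact pow_ne_zero _ (pow_ne_zero _ hq)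
      | exact pow_ne_zero _ (neg_ne_zero.mpr one_ne_zero)
      | exact one_ne_zero
      | refine mul_ne_zero ?_ ?_
  · repeat
      first
      | exact hQd | exact hQk | exact hC | exact hDk | exact hv
      | exact pow_ne_zero _ hq | exact pow_ne_zero _ hy1 | exact pow_ne_zero _ hy2
      | exact pow_ne_zero _ hy3 | exact pow_ne_zero _ hz1 | exact pow_ne_zero _ hz2
      | exact pow_ne_zero _ (pow_ne_zero _ hq)
      | exact pow_ne_zero _ (neg_ne_zero.mpr one_ne_zero)
      | exact one_ne_zero
      | refine mul_ne_zero ?_ ?_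
  rw [hy3v]
  field_simp
  ring
end
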